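/- Let t ∈ ω^{<ω}, α ∈ K_t, and p > Σ_t := ⟨Σ^t_{|t|},0⟩ be such that α|p is placed with witness t'. Then t ⊆ t'. -/

import Mathlib

/-- Triangular numbers. -/
def tri (m : ℕ) : ℕ := m * (m + 1) / 2

/-- The pairing `⟨n,p⟩ := (Σ_{k ≤ n+p} k) + p`. -/
def pairN (n p : ℕ) : ℕ := tri (n + p) + p

/-- `Σ^t_k := Σ_{j<k} (t(j) + 2)`. -/
def sigT (t : List ℕ) (k : ℕ) : ℕ := ((t.take k).map (· + 2)).sum

/-- The set `K_t ⊆ 2^ω`: for each `k < |t|`, the vertical slices numbered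
`Σ^t_k, …, Σ^t_k + t(k) + 1` are prescribed: the `i`-th of them is
`(w_{t(k)})_i · 0^∞`, except that the `0`-th one additionally carries a `1`
at position `t(k) + 1` (i.e. equals `(w_{t(k)})₀·0^{t(k)+1-|(w_{t(k)})₀|}·1·0^∞`). -/
def Kt (w : ℕ → List Bool) (t : List ℕ) : Set (ℕ → Bool) :=
  {α | ∀ k < t.length, ∀ i < t.getD k 0 + 2, ∀ p,
    α (pairN (sigT t k + i) p) =
      if i = 0 ∧ p = t.getD k 0 + 1 then true
      else (w (t.getD k 0)).getD (pairN i p) false}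

/-- The clopen piece `K^ε_t := {α ∈ K_t : α(⟨Σ^t_{|t|}, 0⟩) = ε}`. -/
def Keps (w : ℕ → List Bool) (t : List ℕ) (ε : Bool) : Set (ℕ → Bool) :=
  {α | α ∈ Kt w t ∧ α (pairN (sigT t t.length) 0) = ε}

/-- `M(q) := max {m : Σ_{k≤m} k ≤ q}`. -/
def Mq (q : ℕ) : ℕ := Nat.findGreatest (fun m => tri m ≤ q) q

/-- The second inverse-pairing coordinate: `(q)₁ := q − Σ_{k≤M(q)} k`. -/
def unpair1 (q : ℕ) : ℕ := q - tri (Mq q)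

/-- The first inverse-pairing coordinate: `(q)₀ := M(q) − (q)₁`. -/
def unpair0 (q : ℕ) : ℕ := Mq q - unpair1 q

/-- The basic clopen set `N_u := {α : u ⊆ α}`. -/
def Nu (u : List Bool) : Set (ℕ → Bool) := {α | ∀ k < u.length, α k = u.getD k false}

/-- `u` is placed with witness `t`: `N_u ∩ K_t ≠ ∅`, `(|u|−1)₀ = Σ^t_{|t|}`, and
`u(|u|−1) = 1` whenever `(|u|−1)₁ > 0`. -/
def PlacedWit (w : ℕ → List Bool) (u : List Bool) (t : List ℕ) : Prop :=
  (Nu u ∩ Kt w t).Nonempty ∧ unpair0 (u.length - 1) = sigT t t.length ∧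
  (0 < unpair1 (u.length - 1) → u.getD (u.length - 1) false = true)

/-- `u` is placed: `u ≠ ∅` and it has some witness. -/
def Placed (w : ℕ → List Bool) (u : List Bool) : Prop :=
  u ≠ [] ∧ ∃ t : List ℕ, PlacedWit w u t

/-- The initial segment `α|p` as a finite sequence. -/
def restr (α : ℕ → Bool) (p : ℕ) : List Bool := List.ofFn fun i : Fin p => α i

/-!
Along the coding columns of `K_t`, column `Σ^t_k` ends with its last `1` at row `t(k) + 1`.
Inductively, `α` and the witness `β ∈ K_{t'}` agree on `α|p`, which contains the whole
column `Σ^t_k` up to that `1` and likewise for `t'`; comparing the positions of the last `1`s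
gives `t(k) = t'(k)`. The list `t'` cannot stop before `t`: then the last bit of `α|p` would
lie in column `Σ^t_k` above its last `1` and be `1`, by the third placement condition.
-/

lemma tri_succ (m : ℕ) : tri (m + 1) = tri m + (m + 1) := by
  unfold tri
  rw [show (m + 1) * (m + 1 + 1) = m * (m + 1) + (m + 1) * 2 by ring,
    Nat.add_mul_div_right _ _ two_pos]

lemma tri_mono : Monotone tri :=
  monotone_nat_of_le_succ fun m => by rw [tri_succ]; omega

lemma le_tri (m : ℕ) : m ≤ tri m := by
  induction m with
  | zero => exact Nat.zero_le _
  | succ m ih => rw [tri_succ]; omega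

lemma pairN_lt_pairN_zero {a m b : ℕ} (h : a + m < b) : pairN a m < pairN b 0 := by
  have := tri_mono (show a + m + 1 ≤ b from h)
  rw [tri_succ] at this
  simp only [pairN, add_zero]
  omega

lemma pairN_zero_le (a m : ℕ) : pairN a 0 ≤ pairN a m := by
  have := tri_mono (Nat.le_add_right a m)
  simp only [pairN, add_zero]
  omega

lemma tri_Mq_le (q : ℕ) : tri (Mq q) ≤ q :=
  Nat.findGreatest_spec (P := fun m => tri m ≤ q) (Nat.zero_le q) (by simp [tri])

lemma lt_tri_Mq_succ (q : ℕ) : q < tri (Mq q + 1) := by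
  by_contra! h
  exact Nat.findGreatest_is_greatest (P := fun m => tri m ≤ q) (Nat.lt_succ_self _)
    ((le_tri _).trans h) h

lemma pairN_unpair (q : ℕ) : pairN (unpair0 q) (unpair1 q) = q := by
  have h₁ := tri_Mq_le q
  have h₂ := lt_tri_Mq_succ q
  rw [tri_succ] at h₂
  have hM : unpair0 q + unpair1 q = Mq q := by unfold unpair0 unpair1; omega
  unfold pairN
  rw [hM]
  unfold unpair1
  omega

lemma pairN_unpair0_zero_le (q : ℕ) : pairN (unpair0 q) 0 ≤ q :=
  (pairN_zero_le _ _).trans (pairN_unpair q).le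

lemma sigT_succ {l : List ℕ} {k : ℕ} (hk : k < l.length) :
    sigT l (k + 1) = sigT l k + (l.getD k 0 + 2) := by
  rw [List.getD_eq_getElem _ _ hk]
  unfold sigT
  rw [List.take_add_one, List.getElem?_eq_getElem hk]
  simp only [Option.toList_some, List.map_append, List.map_cons, List.map_nil, List.sum_append,
    List.sum_cons, List.sum_nil, add_zero]

lemma sigT_mono (l : List ℕ) : Monotone (sigT l) := by
  intro a b h
  obtain ⟨c, rfl⟩ := Nat.exists_eq_add_of_le h
  simp [sigT, List.take_add]

lemma pairN_sigT_lt {l : List ℕ} {k m : ℕ} (hk : k < l.length) (hm : m ≤ l.getD k 0 + 1) :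
    pairN (sigT l k) m < pairN (sigT l l.length) 0 := by
  apply pairN_lt_pairN_zero
  have := sigT_mono l (show k + 1 ≤ l.length from hk)
  rw [sigT_succ hk] at this
  omega

lemma restr_length (α : ℕ → Bool) (p : ℕ) : (restr α p).length = p := by
  simp [restr]

lemma restr_getD (α : ℕ → Bool) {p k : ℕ} (h : k < p) : (restr α p).getD k false = α k := by
  simp [restr, List.getD_eq_getElem?_getD, h]

section Kt

variable {w : ℕ → List Bool} {t t' : List ℕ} {α β : ℕ → Bool} {k : ℕ}

lemma apply_pairN_sigT_of_le (hw : ∀ n, (w n).length = n + 1) (hα : α ∈ Kt w t)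
    (hk : k < t.length) {m : ℕ} (hm : t.getD k 0 + 1 ≤ m) :
    α (pairN (sigT t k) m) = decide (m = t.getD k 0 + 1) := by
  have h := hα k hk 0 (Nat.succ_pos _) m
  rw [add_zero] at h
  rw [h]
  by_cases hm' : m = t.getD k 0 + 1
  · simp [hm']
  · have : (w (t.getD k 0)).length ≤ pairN 0 m := by
      rw [hw]; unfold pairN; omega
    rw [if_neg fun h => hm' h.2, List.getD_eq_default _ _ this, decide_eq_false hm']

lemma getD_le_of_apply_eq (hw : ∀ n, (w n).length = n + 1) (hα : α ∈ Kt w t)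
    (hβ : β ∈ Kt w t') (hk : k < t.length) (hk' : k < t'.length) (hσ : sigT t k = sigT t' k)
    (heq : α (pairN (sigT t k) (t'.getD k 0 + 1)) = β (pairN (sigT t k) (t'.getD k 0 + 1))) :
    t'.getD k 0 ≤ t.getD k 0 := by
  by_contra! hlt
  rw [apply_pairN_sigT_of_le hw hα hk (by omega), hσ,
    apply_pairN_sigT_of_le hw hβ hk' le_rfl] at heq
  simp only [decide_true, decide_eq_true_eq] at heq
  omega

variable {p : ℕ}

lemma unpair0_ne_sigT (hw : ∀ n, (w n).length = n + 1) (hα : α ∈ Kt w t)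
    (hp : pairN (sigT t t.length) 0 < p) (hlast : 0 < unpair1 (p - 1) → α (p - 1) = true)
    (hk : k < t.length) : unpair0 (p - 1) ≠ sigT t k := by
  intro h0
  have hq := pairN_unpair (p - 1)
  rw [h0] at hq
  have hrow : t.getD k 0 + 2 ≤ unpair1 (p - 1) := by
    by_contra! hlt
    have := pairN_sigT_lt hk (m := unpair1 (p - 1)) (by omega)
    omega
  have := hlast (by omega)
  rw [← hq, apply_pairN_sigT_of_le hw hα hk (by omega), decide_eq_true_eq] at this
  omega

lemma take_succ_eq_of_placedWit (hw : ∀ n, (w n).length = n + 1) (hα : α ∈ Kt w t)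
    (hβ : β ∈ Kt w t') (hagree : ∀ x < p, β x = α x) (hp : pairN (sigT t t.length) 0 < p)
    (h0 : unpair0 (p - 1) = sigT t' t'.length) (hlast : 0 < unpair1 (p - 1) → α (p - 1) = true)
    (hk : k < t.length) (htake : t.take k = t'.take k) :
    t.take (k + 1) = t'.take (k + 1) := by
  have hσ : sigT t k = sigT t' k := by simp only [sigT, htake]
  have hk' : k < t'.length := by
    have hle : k ≤ t'.length := by
      simpa [hk.le] using congrArg List.length htake
    refine lt_of_le_of_ne hle fun hlen => unpair0_ne_sigT hw hα hp hlast hk ?_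
    rw [h0, ← hlen, hσ]
  have hpa := pairN_sigT_lt hk (le_refl (t.getD k 0 + 1))
  have hpb := pairN_sigT_lt hk' (le_refl (t'.getD k 0 + 1))
  rw [← h0] at hpb
  have hq := pairN_unpair0_zero_le (p - 1)
  have hval : t.getD k 0 = t'.getD k 0 :=
    le_antisymm
      (getD_le_of_apply_eq hw hβ hα hk' hk hσ.symm (hagree _ (by rw [← hσ]; omega)))
      (getD_le_of_apply_eq hw hα hβ hk hk' hσ (hagree _ (by rw [hσ]; omega)).symm)
  rw [List.getD_eq_getElem _ _ hk, List.getD_eq_getElem _ _ hk'] at hval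
  rw [List.take_add_one, List.take_add_one, htake, List.getElem?_eq_getElem hk,
    List.getElem?_eq_getElem hk', hval]

end Kt

/-- if `α ∈ K_t` and `p > Σ_t = ⟨Σ^t_{|t|}, 0⟩` is such that `α|p` is
placed with witness `t'`, then `t ⊆ t'`. -/
theorem stmt18 (w : ℕ → List Bool) (hw : ∀ n, (w n).length = n + 1)
    (t t' : List ℕ) (α : ℕ → Bool) (hα : α ∈ Kt w t) (p : ℕ)
    (hp : pairN (sigT t t.length) 0 < p) (hwit : PlacedWit w (restr α p) t') :
    t <+: t' := by
  obtain ⟨⟨β, hβu, hβ⟩, h0, hlast⟩ := hwit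
  rw [restr_length] at h0 hlast
  have hagree : ∀ x < p, β x = α x := fun x hx =>
    (hβu x (by rwa [restr_length])).trans (restr_getD α hx)
  have hlast' : 0 < unpair1 (p - 1) → α (p - 1) = true := fun h =>
    (restr_getD α (by omega)).symm.trans (hlast h)
  have htake : ∀ k ≤ t.length, t.take k = t'.take k := by
    intro k hk
    induction k with
    | zero => simp
    | succ k ih =>
      exact take_succ_eq_of_placedWit hw hα hβ hagree hp h0 hlast' hk (ih (by omega))
  rw [List.prefix_iff_eq_take]
  simpa using htake t.length le_rfl
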